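/- Let T be a finite tree with a proper 2-coloring into classes V_A and V_B, and let a ∈ V_A and b ∈ V_B be adjacent. For k ∈ ℕ let odd(k) = k if k is odd and k+1 otherwise, and even(k) = k if k is even and k+1 otherwise (note odd(h_a(b)) ≠ even(h_b(a)) always). Then, for the alternating pruning sequence (H_n), the least n such that either (n is odd and b is a leaf of H_{n−1}) or (n is even and a is a leaf of H_{n−1}) equals min(odd(h_a(b)), even(h_b(a))); moreover this least n is odd — i.e., the starting player A, placed at a, answers first under the alternating cutting-off-leaves strategy — if and only if odd(h_a(b)) < even(h_b(a)). -/

import Mathlib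

/-- A vertex is a leaf of a simple graph if it has exactly one neighbor. -/
def IsLeafVert {V : Type*} (H : SimpleGraph V) (v : V) : Prop :=
  ∃! w, H.Adj v w

/-- Remove those leaves of a graph that lie in the set `S` (a removed vertex keeps no
incident edges, i.e. becomes isolated, which models deleting it). -/
def pruneLeavesIn {V : Type*} (H : SimpleGraph V) (S : Set V) : SimpleGraph V where
  Adj u v := H.Adj u v ∧ ¬ (IsLeafVert H u ∧ u ∈ S) ∧ ¬ (IsLeafVert H v ∧ v ∈ S)
  symm := by
    constructor
    intro u v h
    exact ⟨h.1.symm, h.2.2, h.2.1⟩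
  loopless := by
    constructor
    intro v h
    exact H.irrefl h.1

/-- The alternating pruning sequence for the 2-coloring `c` (`c = true` the class `V_A` of
the starting player A, `c = false` the class `V_B`): `H_0 = T` and, for `n ≥ 1`, `H_n` is
`H_{n-1}` minus those leaves of `H_{n-1}` lying in `V_B` if `n` is odd, respectively those
lying in `V_A` if `n` is even. -/
def altPruneSeq {V : Type*} (T : SimpleGraph V) (c : V → Bool) : ℕ → SimpleGraph V
  | 0 => T
  | n + 1 => pruneLeavesIn (altPruneSeq T c n) {v | c v = decide ((n + 1) % 2 = 0)}

/-- `oddify k` is `k` if `k` is odd, else `k + 1`. -/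
def oddify (k : ℕ) : ℕ := if k % 2 = 1 then k else k + 1

/-- `evenify k` is `k` if `k` is even, else `k + 1`. -/
def evenify (k : ℕ) : ℕ := if k % 2 = 0 then k else k + 1

/-- The height of `v` in the tree rooted at `a`:
`1 +` the maximum of `dist v w` over all vertices `w` such that `v` lies on the (unique)
path from `a` to `w`, the latter being expressed by `dist a w = dist a v + dist v w`. -/
noncomputable def rootedHeight {V : Type*} [Fintype V] (T : SimpleGraph V) (a v : V) : ℕ :=
  1 + (Finset.univ.filter fun w => T.dist a w = T.dist a v + T.dist v w).sup
        fun w => T.dist v w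

section Aux
variable {V : Type*} {T : SimpleGraph V} {c : V → Bool}

lemma walk_parity (hc : ∀ u v, T.Adj u v → c u ≠ c v) {y z : V} (W : T.Walk y z) :
    (c y = c z) ↔ Even W.length := by
  induction W with
  | nil => simp
  | @cons y y' z h p ih =>
    have h1 := hc _ _ h
    simp only [SimpleGraph.Walk.length_cons, Nat.even_add_one, ← ih]
    cases hy : c y <;> cases hy' : c y' <;> cases hz : c z <;> simp_all

lemma dist_parity (hconn : T.Connected) (hc : ∀ u v, T.Adj u v → c u ≠ c v) (y z : V) :
    (c y = c z) ↔ Even (T.dist y z) := by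
  obtain ⟨W, hW⟩ := hconn.exists_walk_length_eq_dist y z
  rw [← hW]; exact walk_parity hc W

lemma adj_dist_cases (hconn : T.Connected) (hc : ∀ u v, T.Adj u v → c u ≠ c v)
    {u v : V} (huv : T.Adj u v) (x : V) :
    T.dist u x = T.dist v x + 1 ∨ T.dist v x = T.dist u x + 1 := by
  have h1 : T.dist u x ≤ T.dist u v + T.dist v x := hconn.dist_triangle
  have h2 : T.dist v x ≤ T.dist v u + T.dist u x := hconn.dist_triangle
  have h3 : T.dist u v = 1 := SimpleGraph.dist_eq_one_iff_adj.mpr huv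
  have h4 : T.dist v u = 1 := SimpleGraph.dist_eq_one_iff_adj.mpr huv.symm
  have hne : T.dist u x ≠ T.dist v x := by
    intro he
    have p1 := dist_parity hconn hc u x
    have p2 := dist_parity hconn hc v x
    have h5 := hc u v huv
    rw [he] at p1
    cases hcu : c u <;> cases hcv : c v <;> cases hcx : c x <;> simp_all [Nat.even_iff, Nat.odd_iff]
  omega

lemma exists_step (hconn : T.Connected) {v x : V} (h : T.dist v x ≠ 0) :
    ∃ w, T.Adj v w ∧ T.dist w x + 1 = T.dist v x := by
  obtain ⟨p, hp⟩ := hconn.exists_walk_length_eq_dist v x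
  cases p with
  | nil => rw [SimpleGraph.Walk.length_nil] at hp; exact absurd hp.symm h
  | @cons _ w _ hadj q =>
    refine ⟨w, hadj, ?_⟩
    have h1 : T.dist w x ≤ q.length := SimpleGraph.dist_le q
    have h2 : T.dist v x ≤ T.dist v w + T.dist w x := hconn.dist_triangle
    have h3 : T.dist v w = 1 := SimpleGraph.dist_eq_one_iff_adj.mpr hadj
    rw [SimpleGraph.Walk.length_cons] at hp
    omega

lemma no_two_steps (hT : T.IsTree) {v u w x : V} (hvu : T.Adj v u) (hvw : T.Adj v w)
    (huw : u ≠ w) (h1 : T.dist u x + 1 = T.dist v x) (h2 : T.dist w x + 1 = T.dist v x) :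
    False := by
  obtain ⟨p, hpl⟩ := hT.isConnected.exists_walk_length_eq_dist u x
  obtain ⟨q, hql⟩ := hT.isConnected.exists_walk_length_eq_dist w x
  have hW1 : (p.cons hvu).length = T.dist v x := by
    rw [SimpleGraph.Walk.length_cons, hpl]; omega
  have hW2 : (q.cons hvw).length = T.dist v x := by
    rw [SimpleGraph.Walk.length_cons, hql]; omega
  have hP1 : (p.cons hvu).IsPath := (p.cons hvu).isPath_of_length_eq_dist hW1
  have hP2 : (q.cons hvw).IsPath := (q.cons hvw).isPath_of_length_eq_dist hW2
  have heq := hT.IsAcyclic.path_unique ⟨p.cons hvu, hP1⟩ ⟨q.cons hvw, hP2⟩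
  have hval : (p.cons hvu) = (q.cons hvw) := congrArg Subtype.val heq
  have hg : (p.cons hvu).getVert 1 = (q.cons hvw).getVert 1 := by rw [hval]
  rw [SimpleGraph.Walk.getVert_cons_succ, SimpleGraph.Walk.getVert_cons_succ,
    SimpleGraph.Walk.getVert_zero, SimpleGraph.Walk.getVert_zero] at hg
  exact huw hg

end Aux

section Heights
variable {V : Type*} [Fintype V] {T : SimpleGraph V} {c : V → Bool}

lemma one_le_rootedHeight (u v : V) : 1 ≤ rootedHeight T u v := Nat.le_add_right 1 _

lemma dist_le_rootedHeight {u v x : V} (huv : T.Adj u v)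
    (hx : T.dist u x = T.dist u v + T.dist v x) : T.dist v x + 1 ≤ rootedHeight T u v := by
  have : T.dist v x ≤ (Finset.univ.filter fun w => T.dist u w = T.dist u v + T.dist v w).sup
      fun w => T.dist v w :=
    Finset.le_sup (Finset.mem_filter.mpr ⟨Finset.mem_univ x, hx⟩)
  unfold rootedHeight
  omega

lemma height_step (hT : T.IsTree) (hc : ∀ u v, T.Adj u v → c u ≠ c v)
    {u v w : V} (huv : T.Adj u v) (hvw : T.Adj v w) (hwu : w ≠ u) :
    rootedHeight T v w + 1 ≤ rootedHeight T u v := by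
  have hconn := hT.isConnected
  have hd1 : T.dist u v = 1 := SimpleGraph.dist_eq_one_iff_adj.mpr huv
  have hd2 : T.dist v w = 1 := SimpleGraph.dist_eq_one_iff_adj.mpr hvw
  have key : ∀ x, T.dist v x = T.dist v w + T.dist w x →
      T.dist u x = T.dist u v + T.dist v x ∧ T.dist v x = T.dist w x + 1 := by
    intro x hx
    rw [hd2] at hx
    rcases adj_dist_cases hconn hc huv x with h | h
    · exact ⟨by omega, by omega⟩
    · exfalso
      exact no_two_steps hT (x := x) huv.symm hvw (Ne.symm hwu) (by omega) (by omega)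
  have hmem : ∀ x, T.dist v x = T.dist v w + T.dist w x →
      T.dist w x + 1 ≤ rootedHeight T u v - 1 := by
    intro x hx
    obtain ⟨k1, k2⟩ := key x hx
    have := dist_le_rootedHeight huv k1
    omega
  have hR1 : 1 ≤ rootedHeight T u v - 1 := by
    have := hmem w (by simp)
    omega
  have hsup : ((Finset.univ.filter fun x => T.dist v x = T.dist v w + T.dist w x).sup
      fun x => T.dist w x) ≤ rootedHeight T u v - 1 - 1 := by
    apply Finset.sup_le
    intro x hx
    have := hmem x (Finset.mem_filter.mp hx).2
    omega
  have hge := one_le_rootedHeight (T := T) u v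
  unfold rootedHeight at *
  omega

lemma height_bound (hT : T.IsTree) (hc : ∀ u v, T.Adj u v → c u ≠ c v)
    {u v : V} (huv : T.Adj u v) {K : ℕ}
    (hK : ∀ w, T.Adj v w → w ≠ u → rootedHeight T v w ≤ K) :
    rootedHeight T u v ≤ K + 1 := by
  have hconn := hT.isConnected
  have hd1 : T.dist u v = 1 := SimpleGraph.dist_eq_one_iff_adj.mpr huv
  have hsup : ((Finset.univ.filter fun x => T.dist u x = T.dist u v + T.dist v x).sup
      fun x => T.dist v x) ≤ K := by
    apply Finset.sup_le
    intro x hx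
    have hx' : T.dist u x = 1 + T.dist v x := by
      rw [← hd1]; exact (Finset.mem_filter.mp hx).2
    by_cases hxv : x = v
    · subst hxv
      rw [SimpleGraph.dist_self]
      exact Nat.zero_le K
    · have hne : T.dist v x ≠ 0 :=
        SimpleGraph.dist_ne_zero_iff_ne_and_reachable.mpr ⟨Ne.symm hxv, hconn v x⟩
      obtain ⟨w, hvw, hw⟩ := exists_step hconn hne
      have hwu : w ≠ u := by
        intro h; subst h; omega
      have hxS : T.dist v x = T.dist v w + T.dist w x := by
        rw [SimpleGraph.dist_eq_one_iff_adj.mpr hvw]; omega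
      have := dist_le_rootedHeight hvw hxS
      have := hK w hvw hwu
      omega
  unfold rootedHeight
  omega

end Heights

section Arith

lemma oddify_odd (k : ℕ) : oddify k % 2 = 1 := by unfold oddify; split <;> omega
lemma evenify_even (k : ℕ) : evenify k % 2 = 0 := by unfold evenify; split <;> omega
lemma le_oddify (k : ℕ) : k ≤ oddify k := by unfold oddify; split <;> omega
lemma le_evenify (k : ℕ) : k ≤ evenify k := by unfold evenify; split <;> omega
lemma oddify_lt_evenify {x y : ℕ} (h : x < y) : oddify x < evenify y := by
  unfold oddify evenify; split <;> split <;> omega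
lemma evenify_lt_oddify {x y : ℕ} (h : x < y) : evenify x < oddify y := by
  unfold oddify evenify; split <;> split <;> omega
lemma oddify_le_of_odd {x m : ℕ} (h : x ≤ m) (hm : m % 2 = 1) : oddify x ≤ m := by
  unfold oddify; split <;> omega
lemma evenify_le_of_even {x m : ℕ} (h : x ≤ m) (hm : m % 2 = 0) : evenify x ≤ m := by
  unfold evenify; split <;> omega

end Arith

noncomputable def stepVal {V : Type*} [Fintype V] (T : SimpleGraph V) (c : V → Bool)
    (u v : V) : ℕ :=
  if c v = true then evenify (rootedHeight T u v) else oddify (rootedHeight T u v)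

section StepVal
variable {V : Type*} [Fintype V] {T : SimpleGraph V} {c : V → Bool}

lemma stepVal_pos (u v : V) : 1 ≤ stepVal T c u v := by
  have h := one_le_rootedHeight (T := T) u v
  have h1 := le_oddify (rootedHeight T u v)
  have h2 := le_evenify (rootedHeight T u v)
  unfold stepVal; split <;> omega

lemma height_le_stepVal (u v : V) : rootedHeight T u v ≤ stepVal T c u v := by
  have h1 := le_oddify (rootedHeight T u v)
  have h2 := le_evenify (rootedHeight T u v)
  unfold stepVal; split <;> omega

lemma stepVal_mod (u v : V) :
    stepVal T c u v % 2 = if c v = true then 0 else 1 := by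
  unfold stepVal
  split <;> simp [oddify_odd, evenify_even]

lemma stepVal_lt (hT : T.IsTree) (hc : ∀ u v, T.Adj u v → c u ≠ c v)
    {u v w : V} (huv : T.Adj u v) (hvw : T.Adj v w) (hwu : w ≠ u) :
    stepVal T c v w < stepVal T c u v := by
  have hh : rootedHeight T v w < rootedHeight T u v := by
    have := height_step hT hc huv hvw hwu
    omega
  have hcc := hc v w hvw
  unfold stepVal
  cases hcv : c v <;> cases hcw : c w <;> simp_all
  · exact evenify_lt_oddify hh
  · exact oddify_lt_evenify hh

lemma stepVal_rev (hT : T.IsTree) (hc : ∀ u v, T.Adj u v → c u ≠ c v)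
    {u v w : V} (huv : T.Adj u v) (hvw : T.Adj v w) (hwu : w ≠ u) :
    stepVal T c v u < stepVal T c w v := by
  have hh : rootedHeight T v u < rootedHeight T w v := by
    have := height_step hT hc hvw.symm huv.symm (Ne.symm hwu)
    omega
  have hcc := hc u v huv
  unfold stepVal
  cases hcv : c v <;> cases hcu : c u <;> simp_all
  · exact evenify_lt_oddify hh
  · exact oddify_lt_evenify hh

lemma stepVal_tight (hT : T.IsTree) (hc : ∀ u v, T.Adj u v → c u ≠ c v)
    {u v : V} (huv : T.Adj u v) {m : ℕ} (hm1 : 1 ≤ m)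
    (hpar : m % 2 = if c v = true then 0 else 1)
    (hw : ∀ w, T.Adj v w → w ≠ u → stepVal T c v w < m) :
    stepVal T c u v ≤ m := by
  have hb : rootedHeight T u v ≤ m := by
    have := height_bound hT hc huv (K := m - 1) (fun w h1 h2 => by
      have h3 := hw w h1 h2
      have h4 := height_le_stepVal (T := T) (c := c) v w
      omega)
    omega
  unfold stepVal
  split
  · rename_i h; rw [h] at hpar; simp at hpar; exact evenify_le_of_even hb hpar
  · rename_i h; simp at h; rw [h] at hpar; simp at hpar; exact oddify_le_of_odd hb hpar

end StepVal

section Prune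
variable {V : Type*} {T : SimpleGraph V} {c : V → Bool}

lemma altPruneSeq_succ (n : ℕ) : altPruneSeq T c (n + 1) =
    pruneLeavesIn (altPruneSeq T c n) {v | c v = decide ((n + 1) % 2 = 0)} := rfl

lemma pruneLeavesIn_adj {H : SimpleGraph V} {S : Set V} {u v : V} :
    (pruneLeavesIn H S).Adj u v ↔
      H.Adj u v ∧ ¬ (IsLeafVert H u ∧ u ∈ S) ∧ ¬ (IsLeafVert H v ∧ v ∈ S) := Iff.rfl

lemma alt_adj_mono {n : ℕ} {u v : V} (h : (altPruneSeq T c (n + 1)).Adj u v) :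
    (altPruneSeq T c n).Adj u v := by
  rw [altPruneSeq_succ, pruneLeavesIn_adj] at h
  exact h.1

lemma alt_adj_le_T : ∀ (n : ℕ) {u v : V}, (altPruneSeq T c n).Adj u v → T.Adj u v := by
  intro n
  induction n with
  | zero => exact fun h => h
  | succ n ih => exact fun h => ih (alt_adj_mono h)

end Prune

section Claims
variable {V : Type*} [Fintype V] {T : SimpleGraph V} {c : V → Bool}

lemma parity_of_decide {m : ℕ} {b : Bool} (h : b = decide (m % 2 = 0)) :
    m % 2 = if b = true then 0 else 1 := by
  rcases Nat.mod_two_eq_zero_or_one m with h2 | h2 <;> rw [h2] at h ⊢ <;> simp_all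

lemma decide_of_parity {m : ℕ} {b : Bool} (h : m % 2 = if b = true then 0 else 1) :
    b = decide (m % 2 = 0) := by
  cases b <;> simp_all <;> omega

lemma claimA (hT : T.IsTree) (hc : ∀ u v, T.Adj u v → c u ≠ c v) :
    ∀ (n : ℕ) (u v : V), T.Adj u v → n < stepVal T c u v → n < stepVal T c v u →
      (altPruneSeq T c n).Adj u v := by
  intro n
  induction n with
  | zero => exact fun u v h _ _ => h
  | succ n ih =>
    intro u v huv h1 h2
    rw [altPruneSeq_succ, pruneLeavesIn_adj]
    have key : ∀ p q : V, T.Adj p q → n + 1 < stepVal T c p q → n + 1 < stepVal T c q p →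
        ¬ (IsLeafVert (altPruneSeq T c n) q ∧ q ∈ {x | c x = decide ((n + 1) % 2 = 0)}) := by
      rintro p q hpq g1 g2 ⟨⟨x0, hx0, hux⟩, hcq⟩
      have hqp : (altPruneSeq T c n).Adj q p :=
        (ih p q hpq (by omega) (by omega)).symm
      have hx0p : p = x0 := hux p hqp
      have hws : ∀ w, T.Adj q w → w ≠ p → stepVal T c q w < n + 1 := by
        intro w hqw hwp
        by_contra hlt
        push_neg at hlt
        have hwq : n < stepVal T c w q := by
          have := stepVal_rev hT hc hpq hqw hwp
          omega
        have hadjn : (altPruneSeq T c n).Adj q w := ih q w hqw (by omega) hwq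
        exact hwp ((hux w hadjn).trans hx0p.symm)
      have hpar : (n + 1) % 2 = if c q = true then 0 else 1 := parity_of_decide hcq
      have := stepVal_tight hT hc hpq (by omega) hpar hws
      omega
    exact ⟨ih u v huv (by omega) (by omega), key v u huv.symm h2 h1, key u v huv h1 h2⟩

lemma claimB (hT : T.IsTree) (hc : ∀ u v, T.Adj u v → c u ≠ c v) :
    ∀ (n : ℕ) (u v : V), T.Adj u v → stepVal T c u v ≤ n →
      stepVal T c u v ≤ stepVal T c v u → ¬ (altPruneSeq T c n).Adj u v := by
  intro n
  induction n using Nat.strong_induction_on with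
  | _ n ih =>
    intro u v huv h1 h2
    have hpos : 1 ≤ stepVal T c u v := stepVal_pos u v
    rcases eq_or_lt_of_le h1 with heq | hlt
    · -- stepVal = n, n = k + 1
      obtain ⟨k, rfl⟩ : ∃ k, n = k + 1 := ⟨n - 1, by omega⟩
      intro hadj
      rw [altPruneSeq_succ, pruneLeavesIn_adj] at hadj
      apply hadj.2.2
      constructor
      · refine ⟨u, hadj.1.symm, ?_⟩
        intro x hx
        by_contra hxu
        have hTx : T.Adj v x := alt_adj_le_T k hx
        have l1 : stepVal T c v x < stepVal T c u v := stepVal_lt hT hc huv hTx hxu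
        have l2 : stepVal T c v u < stepVal T c x v := stepVal_rev hT hc huv hTx hxu
        exact ih k (by omega) v x hTx (by omega) (by omega) hx
      · show c v = decide ((k + 1) % 2 = 0)
        apply decide_of_parity
        have hm := stepVal_mod (T := T) (c := c) u v
        rw [heq] at hm
        exact hm
    · intro hadj
      obtain ⟨k, rfl⟩ : ∃ k, n = k + 1 := ⟨n - 1, by omega⟩
      exact ih k (by omega) u v huv (by omega) h2 (alt_adj_mono hadj)

end Claims

theorem who_answers_first_alternating' {V : Type*} [Fintype V] (T : SimpleGraph V)
    (hT : T.IsTree) (c : V → Bool) (hc : ∀ u v, T.Adj u v → c u ≠ c v)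
    (a b : V) (ha : c a = true) (hb : c b = false) (hab : T.Adj a b) :
    (∃ n : ℕ, 1 ≤ n ∧
      ((Odd n ∧ IsLeafVert (altPruneSeq T c (n - 1)) b) ∨
        (Even n ∧ IsLeafVert (altPruneSeq T c (n - 1)) a))) ∧
    (∀ n : ℕ, 1 ≤ n →
      ((Odd n ∧ IsLeafVert (altPruneSeq T c (n - 1)) b) ∨
        (Even n ∧ IsLeafVert (altPruneSeq T c (n - 1)) a)) →
      (∀ m : ℕ, 1 ≤ m → m < n →
        ¬ ((Odd m ∧ IsLeafVert (altPruneSeq T c (m - 1)) b) ∨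
            (Even m ∧ IsLeafVert (altPruneSeq T c (m - 1)) a))) →
      n = min (oddify (rootedHeight T a b)) (evenify (rootedHeight T b a)) ∧
        (Odd n ↔ oddify (rootedHeight T a b) < evenify (rootedHeight T b a))) := by
  have hsb : stepVal T c a b = oddify (rootedHeight T a b) := by
    unfold stepVal; rw [hb]; simp
  have hsa : stepVal T c b a = evenify (rootedHeight T b a) := by
    unfold stepVal; rw [ha]; simp
  have hFbodd : stepVal T c a b % 2 = 1 := by rw [hsb]; exact oddify_odd _
  have hFaeven : stepVal T c b a % 2 = 0 := by rw [hsa]; exact evenify_even _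
  have hFb1 : 1 ≤ stepVal T c a b := stepVal_pos a b
  have hFa1 : 1 ≤ stepVal T c b a := stepVal_pos b a
  have hN1 : 1 ≤ min (stepVal T c a b) (stepVal T c b a) := by omega
  have hPN : (Odd (min (stepVal T c a b) (stepVal T c b a)) ∧
        IsLeafVert (altPruneSeq T c (min (stepVal T c a b) (stepVal T c b a) - 1)) b) ∨
      (Even (min (stepVal T c a b) (stepVal T c b a)) ∧
        IsLeafVert (altPruneSeq T c (min (stepVal T c a b) (stepVal T c b a) - 1)) a) := by
    rcases lt_or_ge (stepVal T c a b) (stepVal T c b a) with hlt | hle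
    · left
      have hNb : min (stepVal T c a b) (stepVal T c b a) = stepVal T c a b := by omega
      rw [hNb]
      constructor
      · rw [Nat.odd_iff]; omega
      · have hadj : (altPruneSeq T c (stepVal T c a b - 1)).Adj a b :=
          claimA hT hc _ a b hab (by omega) (by omega)
        refine ⟨a, hadj.symm, ?_⟩
        intro x hx
        by_contra hxa
        have hTx : T.Adj b x := alt_adj_le_T _ hx
        have l1 : stepVal T c b x < stepVal T c a b := stepVal_lt hT hc hab hTx hxa
        have l2 : stepVal T c b a < stepVal T c x b := stepVal_rev hT hc hab hTx hxa
        exact claimB hT hc _ b x hTx (by omega) (by omega) hx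
    · right
      have hne : stepVal T c a b ≠ stepVal T c b a := by omega
      have hlt : stepVal T c b a < stepVal T c a b := by omega
      have hNa : min (stepVal T c a b) (stepVal T c b a) = stepVal T c b a := by omega
      rw [hNa]
      constructor
      · rw [Nat.even_iff]; omega
      · have hadj : (altPruneSeq T c (stepVal T c b a - 1)).Adj a b :=
          claimA hT hc _ a b hab (by omega) (by omega)
        refine ⟨b, hadj, ?_⟩
        intro x hx
        by_contra hxb
        have hTx : T.Adj a x := alt_adj_le_T _ hx
        have l1 : stepVal T c a x < stepVal T c b a := stepVal_lt hT hc hab.symm hTx hxb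
        have l2 : stepVal T c a b < stepVal T c x a := stepVal_rev hT hc hab.symm hTx hxb
        exact claimB hT hc _ a x hTx (by omega) (by omega) hx
  have hL2 : ∀ m, 1 ≤ m → m < min (stepVal T c a b) (stepVal T c b a) →
      ¬ ((Odd m ∧ IsLeafVert (altPruneSeq T c (m - 1)) b) ∨
          (Even m ∧ IsLeafVert (altPruneSeq T c (m - 1)) a)) := by
    intro m hm1 hmN hP
    rcases hP with ⟨hodd, x0, hx0, hux⟩ | ⟨heven, x0, hx0, hux⟩
    · have hadj : (altPruneSeq T c (m - 1)).Adj b a :=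
        (claimA hT hc _ a b hab (by omega) (by omega)).symm
      have hax0 : a = x0 := hux a hadj
      have hws : ∀ w, T.Adj b w → w ≠ a → stepVal T c b w < m := by
        intro w hbw hwa
        by_contra hlt
        push_neg at hlt
        have l2 : stepVal T c b a < stepVal T c w b := stepVal_rev hT hc hab hbw hwa
        have hadj2 : (altPruneSeq T c (m - 1)).Adj b w :=
          claimA hT hc _ b w hbw (by omega) (by omega)
        exact hwa ((hux w hadj2).trans hax0.symm)
      have hpar : m % 2 = if c b = true then 0 else 1 := by
        rw [hb]; simp [Nat.odd_iff.mp hodd]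
      have := stepVal_tight hT hc hab hm1 hpar hws
      omega
    · have hadj : (altPruneSeq T c (m - 1)).Adj a b :=
        claimA hT hc _ a b hab (by omega) (by omega)
      have hbx0 : b = x0 := hux b hadj
      have hws : ∀ w, T.Adj a w → w ≠ b → stepVal T c a w < m := by
        intro w haw hwb
        by_contra hlt
        push_neg at hlt
        have l2 : stepVal T c a b < stepVal T c w a := stepVal_rev hT hc hab.symm haw hwb
        have hadj2 : (altPruneSeq T c (m - 1)).Adj a w :=
          claimA hT hc _ a w haw (by omega) (by omega)
        exact hwb ((hux w hadj2).trans hbx0.symm)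
      have hpar : m % 2 = if c a = true then 0 else 1 := by
        rw [ha]; simp [Nat.even_iff.mp heven]
      have := stepVal_tight hT hc hab.symm hm1 hpar hws
      omega
  constructor
  · exact ⟨min (stepVal T c a b) (stepVal T c b a), hN1, hPN⟩
  · intro n hn1 hPn hmin
    have hnN : n = min (stepVal T c a b) (stepVal T c b a) := by
      rcases lt_trichotomy n (min (stepVal T c a b) (stepVal T c b a)) with h | h | h
      · exact absurd hPn (hL2 n hn1 h)
      · exact h
      · exact absurd hPN (hmin _ hN1 h)
    rw [← hsb, ← hsa]
    subst hnN
    refine ⟨rfl, ?_⟩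
    rw [Nat.odd_iff]
    omega


/-- For a finite tree `T` properly 2-colored into `V_A` (`c = true`) and `V_B` (`c = false`)
with `a ∈ V_A` and `b ∈ V_B` adjacent: for the alternating pruning sequence `(H_n)`, the
least `n ≥ 1` such that either (`n` odd and `b` is a leaf of `H_{n-1}`) or (`n` even and
`a` is a leaf of `H_{n-1}`) exists and equals `min (odd (h_a(b)), even (h_b(a)))`; moreover
this least `n` is odd — the starting player A, at `a`, answers first — iff
`odd (h_a(b)) < even (h_b(a))`. -/
theorem who_answers_first_alternating {V : Type*} [Fintype V] (T : SimpleGraph V)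
    (hT : T.IsTree) (c : V → Bool) (hc : ∀ u v, T.Adj u v → c u ≠ c v)
    (a b : V) (ha : c a = true) (hb : c b = false) (hab : T.Adj a b) :
    (∃ n : ℕ, 1 ≤ n ∧
      ((Odd n ∧ IsLeafVert (altPruneSeq T c (n - 1)) b) ∨
        (Even n ∧ IsLeafVert (altPruneSeq T c (n - 1)) a))) ∧
    (∀ n : ℕ, 1 ≤ n →
      ((Odd n ∧ IsLeafVert (altPruneSeq T c (n - 1)) b) ∨
        (Even n ∧ IsLeafVert (altPruneSeq T c (n - 1)) a)) →
      (∀ m : ℕ, 1 ≤ m → m < n →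
        ¬ ((Odd m ∧ IsLeafVert (altPruneSeq T c (m - 1)) b) ∨
            (Even m ∧ IsLeafVert (altPruneSeq T c (m - 1)) a))) →
      n = min (oddify (rootedHeight T a b)) (evenify (rootedHeight T b a)) ∧
        (Odd n ↔ oddify (rootedHeight T a b) < evenify (rootedHeight T b a))) := by
  exact who_answers_first_alternating' T hT c hc a b ha hb hab
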